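/- arXiv:math/0611553 — 5 statements merged into one kernel-verified Lean document; each statement's English description precedes it below -/
import Mathlib

section
/- Let R be an elliptic root system belonging to (F,I) with a signed marking a. If (F¹,I¹) and (F²,I²) are two hyperbolic extensions of (F,I), then there exists a linear isomorphism ψ : F¹ → F² such that ψ(x) = x for all x ∈ F and I²(ψ(x),ψ(y)) = I¹(x,y) for all x,y ∈ F¹; that is, a hyperbolic extension is unique up to isomorphism. -/
open scoped TensorProduct

/-- The radical `{x | I(x,y) = 0 for all y}` of a bilinear form. -/
def bilinRadical {V : Type*} [AddCommGroup V] [Module ℝ V]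
    (I : V →ₗ[ℝ] V →ₗ[ℝ] ℝ) : Submodule ℝ V where
  carrier := {x | ∀ y, I x y = 0}
  add_mem' {a b} ha hb := by intro y; simp [ha y, hb y]
  zero_mem' := by intro y; simp
  smul_mem' c x hx := by intro y; simp [hx y]

/-- The coroot `α^∨ = 2α / I(α,α)` of a non-isotropic vector `α`. -/
noncomputable def coroot {V : Type*} [AddCommGroup V] [Module ℝ V]
    (I : V →ₗ[ℝ] V →ₗ[ℝ] ℝ) (α : V) : V := (2 / I α α) • α

/-- The contraction map `F ⊗_ℤ ℝ → F`, `x ⊗ r ↦ r • x`. -/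
noncomputable def smulContract {V : Type*} [AddCommGroup V] [Module ℝ V] :
    (V ⊗[ℤ] ℝ) →ₗ[ℤ] V :=
  TensorProduct.lift (LinearMap.mk₂ ℤ (fun (x : V) (r : ℝ) => r • x)
    (fun x y r => smul_add r x y)
    (fun c x r => (smul_comm c r x).symm)
    (fun x r s => add_smul r s x)
    (fun c x r => smul_assoc c r x))

/-- The natural map `Q ⊗_ℤ ℝ → F` induced by the inclusion of an additive subgroup
`Q` of a real vector space `F`. -/
noncomputable def latticeMap {V : Type*} [AddCommGroup V] [Module ℝ V]
    (Q : AddSubgroup V) : (↥Q ⊗[ℤ] ℝ) →ₗ[ℤ] V :=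
  smulContract.comp (TensorProduct.map Q.subtype.toIntLinearMap LinearMap.id)

/-!
Write `F₁ = ι₁ F ⊕ ℝ w₁`. An isometry fixing `F` exists as soon as `F₂` contains a vector `w₂`
with the same pairing `φ = I₁ (w₁, ι₁ ·)` against `F` and the same square. As `rad I₁ = ℝ a`,
`φ` kills `a` but not a vector `b` completing `a` to a basis of `rad I`; likewise for the
pairing of any `w ∈ F₂ ∖ ι₂ F` against `F`. So `φ` differs from a multiple of `I₂ (w, ι₂ ·)` by a
functional killing `rad I`, i.e. by some `I (z, ·)`, and is therefore the pairing of a vector of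
`F₂`. Adding to that vector a multiple of `ι₂ b`, which is isotropic and orthogonal to `ι₂ F`,
adjusts its square.
-/

open Module

section Complement

variable {K V W : Type*} [Field K] [AddCommGroup V] [Module K V] [AddCommGroup W] [Module K W]

lemma Submodule.exists_mem_notMem_span_singleton {S : Submodule K V} [FiniteDimensional K S]
    (hS : 1 < finrank K S) (a : V) : ∃ b ∈ S, b ∉ K ∙ a := by
  by_contra! h
  have hle : finrank K S ≤ finrank K (K ∙ a) := Submodule.finrank_mono h
  have := finrank_span_le_card (R := K) ({a} : Set V)
  simp only [Set.toFinset_singleton, Finset.card_singleton] at this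
  omega

lemma LinearMap.exists_notMem_range [FiniteDimensional K W] {ι : V →ₗ[K] W}
    (hι : Function.Injective ι) (hd : finrank K V < finrank K W) :
    ∃ w, w ∉ LinearMap.range ι := by
  by_contra! h
  have := LinearMap.finrank_range_of_inj hι
  rw [LinearMap.range_eq_top.mpr h, finrank_top] at this
  omega

lemma LinearMap.injective_coprod_toSpanSingleton {ι : V →ₗ[K] W} (hι : Function.Injective ι)
    {w : W} (hw : w ∉ LinearMap.range ι) :
    Function.Injective (ι.coprod (LinearMap.toSpanSingleton K W w)) := by
  have hw0 : w ≠ 0 := fun h => hw (h ▸ (LinearMap.range ι).zero_mem)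
  have hdisj :
      Disjoint (LinearMap.range ι) (LinearMap.range (LinearMap.toSpanSingleton K W w)) := by
    rw [LinearMap.range_toSpanSingleton]
    exact Submodule.disjoint_span_singleton_of_notMem hw
  rw [← LinearMap.ker_eq_bot, LinearMap.ker_coprod_of_disjoint_range _ _ hdisj,
    LinearMap.ker_eq_bot.mpr hι, LinearMap.ker_toSpanSingleton K hw0, Submodule.prod_bot]

noncomputable def LinearMap.prodEquivOfNotMemRange [FiniteDimensional K V] [FiniteDimensional K W]
    {ι : V →ₗ[K] W} (hι : Function.Injective ι) {w : W} (hw : w ∉ LinearMap.range ι)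
    (hd : finrank K V + 1 = finrank K W) : (V × K) ≃ₗ[K] W :=
  (ι.coprod (LinearMap.toSpanSingleton K W w)).linearEquivOfInjective
    (ι.injective_coprod_toSpanSingleton hι hw) (by rw [finrank_prod, finrank_self, hd])

@[simp]
lemma LinearMap.prodEquivOfNotMemRange_apply [FiniteDimensional K V] [FiniteDimensional K W]
    {ι : V →ₗ[K] W} (hι : Function.Injective ι) {w : W} (hw : w ∉ LinearMap.range ι)
    (hd : finrank K V + 1 = finrank K W) (p : V × K) :
    ι.prodEquivOfNotMemRange hι hw hd p = ι p.1 + p.2 • w := rfl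

lemma Submodule.span_pair_eq_of_finrank_eq_two {S : Submodule K V} [FiniteDimensional K S]
    (hS : finrank K S = 2) {a b : V} (ha : a ∈ S) (hb : b ∈ S) (ha0 : a ≠ 0)
    (hba : b ∉ K ∙ a) : span K {a, b} = S := by
  have hli : LinearIndependent K ![a, b] := by
    rw [LinearIndependent.pair_iff' ha0]
    exact fun c hc => hba (Submodule.mem_span_singleton.mpr ⟨c, hc⟩)
  have hle : span K {a, b} ≤ S := span_le.mpr (Set.insert_subset ha (by simpa using hb))
  refine Submodule.eq_of_le_of_finrank_eq hle ?_
  rw [hS, ← Matrix.range_cons_cons_empty, finrank_span_eq_card hli, Fintype.card_fin]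

variable {V₁ V₂ : Type*} [AddCommGroup V₁] [Module K V₁] [AddCommGroup V₂] [Module K V₂]
  [FiniteDimensional K V] [FiniteDimensional K V₁] [FiniteDimensional K V₂]

lemma exists_isometry_of_pairing_eq {ι₁ : V →ₗ[K] V₁} {ι₂ : V →ₗ[K] V₂}
    (hι₁ : Function.Injective ι₁) (hι₂ : Function.Injective ι₂)
    (hd₁ : finrank K V + 1 = finrank K V₁) (hd₂ : finrank K V + 1 = finrank K V₂)
    {J₁ : V₁ →ₗ[K] V₁ →ₗ[K] K} {J₂ : V₂ →ₗ[K] V₂ →ₗ[K] K}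
    (hJ₁ : ∀ x y, J₁ x y = J₁ y x) (hJ₂ : ∀ x y, J₂ x y = J₂ y x)
    (hres : ∀ x y, J₂ (ι₂ x) (ι₂ y) = J₁ (ι₁ x) (ι₁ y))
    {w₁ : V₁} {w₂ : V₂} (hw₁ : w₁ ∉ LinearMap.range ι₁) (hw₂ : w₂ ∉ LinearMap.range ι₂)
    (hpair : ∀ x, J₂ w₂ (ι₂ x) = J₁ w₁ (ι₁ x)) (hnorm : J₂ w₂ w₂ = J₁ w₁ w₁) :
    ∃ ψ : V₁ ≃ₗ[K] V₂, (∀ x, ψ (ι₁ x) = ι₂ x) ∧ ∀ u v, J₂ (ψ u) (ψ v) = J₁ u v := by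
  set e₁ := ι₁.prodEquivOfNotMemRange hι₁ hw₁ hd₁
  set e₂ := ι₂.prodEquivOfNotMemRange hι₂ hw₂ hd₂
  refine ⟨e₁.symm.trans e₂, fun x => ?_, fun u v => ?_⟩
  · have : e₁ (x, 0) = ι₁ x := by simp [e₁]
    simp [← this, e₂]
  · obtain ⟨⟨x, s⟩, rfl⟩ := e₁.surjective u
    obtain ⟨⟨y, t⟩, rfl⟩ := e₁.surjective v
    simp only [LinearEquiv.trans_apply, LinearEquiv.symm_apply_apply]
    simp [e₁, e₂, hres, hpair, hnorm, hJ₂ _ w₂, hJ₁ _ w₁]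

end Complement

section Forms

variable {F V : Type*} [AddCommGroup F] [Module ℝ F] [AddCommGroup V] [Module ℝ V]
  {I : F →ₗ[ℝ] F →ₗ[ℝ] ℝ}

lemma exists_eq_of_forall_mem_bilinRadical [FiniteDimensional ℝ F] (hI : ∀ x y, I x y = I y x)
    (μ : Dual ℝ F) (hμ : ∀ r ∈ bilinRadical I, μ r = 0) : ∃ z, I z = μ := by
  have hker : LinearMap.ker I = bilinRadical I := by
    ext x
    simp [LinearMap.ext_iff, bilinRadical]
  obtain ⟨φ, hφ⟩ : μ ∈ LinearMap.range I.dualMap := by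
    rw [LinearMap.range_dualMap_eq_dualAnnihilator_ker, hker]
    exact (Submodule.mem_dualAnnihilator μ).mpr hμ
  refine ⟨(evalEquiv ℝ F).symm φ, LinearMap.ext fun x => ?_⟩
  rw [← hφ, LinearMap.dualMap_apply, hI, apply_evalEquiv_symm_apply]

variable {J : V →ₗ[ℝ] V →ₗ[ℝ] ℝ} {ι : F →ₗ[ℝ] V}

lemma exists_pairing_eq_and_apply_self_eq (hJ : ∀ x y, J x y = J y x)
    (hres : ∀ x y, J (ι x) (ι y) = I x y) {φ : Dual ℝ F} {v : V} (hv : ∀ x, J v (ι x) = φ x)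
    {b : F} (hb : b ∈ bilinRadical I) (hφb : φ b ≠ 0) (c : ℝ) :
    ∃ w, (∀ x, J w (ι x) = φ x) ∧ J w w = c := by
  have hbb : I b b = 0 := hb b
  refine ⟨v + ((c - J v v) / (2 * φ b)) • ι b, fun x => ?_, ?_⟩
  · simp [hv, hres, hb x]
  · simp only [map_add, map_smul, LinearMap.add_apply, LinearMap.smul_apply, smul_eq_mul, hv,
      hres, hbb, hJ (ι b) v]
    field_simp
    ring

lemma notMem_range_of_pairing_eq (hI : ∀ x y, I x y = I y x)
    (hres : ∀ x y, J (ι x) (ι y) = I x y) {φ : Dual ℝ F} {w : V} (hw : ∀ x, J w (ι x) = φ x)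
    {b : F} (hb : b ∈ bilinRadical I) (hφb : φ b ≠ 0) : w ∉ LinearMap.range ι := by
  rintro ⟨z, rfl⟩
  rw [← hw, hres, hI] at hφb
  exact hφb (hb z)

variable {a : F}

lemma apply_marking_eq_zero (hJ : ∀ x y, J x y = J y x)
    (hrad : bilinRadical J = ℝ ∙ ι a) (w : V) : J w (ι a) = 0 := by
  have ha : ι a ∈ bilinRadical J := hrad ▸ Submodule.mem_span_singleton_self (ι a)
  rw [hJ]
  exact ha w

variable [FiniteDimensional ℝ F] [FiniteDimensional ℝ V]

lemma apply_radical_ne_zero (hι : Function.Injective ι) (hd : finrank ℝ F + 1 = finrank ℝ V)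
    (hJ : ∀ x y, J x y = J y x) (hres : ∀ x y, J (ι x) (ι y) = I x y)
    (hrad : bilinRadical J = ℝ ∙ ι a) {w : V} (hw : w ∉ LinearMap.range ι)
    {b : F} (hb : b ∈ bilinRadical I) (hba : b ∉ ℝ ∙ a) : J w (ι b) ≠ 0 := by
  intro h0
  have hιb : ι b ∈ bilinRadical J := fun y => by
    obtain ⟨⟨x, t⟩, rfl⟩ := (ι.prodEquivOfNotMemRange hι hw hd).surjective y
    simp [hres, hb x, hJ (ι b) w, h0]
  rw [hrad, Submodule.mem_span_singleton] at hιb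
  obtain ⟨c, hc⟩ := hιb
  exact hba (Submodule.mem_span_singleton.mpr ⟨c, hι (by rw [map_smul, hc])⟩)

lemma exists_pairing_eq_of_apply_eq_zero (hI : ∀ x y, I x y = I y x)
    (hradI : finrank ℝ (bilinRadical I) = 2) (ha0 : a ≠ 0) (ha : a ∈ bilinRadical I)
    (hι : Function.Injective ι) (hd : finrank ℝ F + 1 = finrank ℝ V)
    (hJ : ∀ x y, J x y = J y x) (hres : ∀ x y, J (ι x) (ι y) = I x y)
    (hrad : bilinRadical J = ℝ ∙ ι a) {b : F} (hb : b ∈ bilinRadical I) (hba : b ∉ ℝ ∙ a)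
    (φ : Dual ℝ F) (hφ : φ a = 0) : ∃ v, ∀ x, J v (ι x) = φ x := by
  obtain ⟨w, hw⟩ := ι.exists_notMem_range hι (by omega)
  have hwb := apply_radical_ne_zero hι hd hJ hres hrad hw hb hba
  set s := φ b / J w (ι b)
  obtain ⟨z, hz⟩ := exists_eq_of_forall_mem_bilinRadical hI (φ - s • (J w).comp ι) <| by
    suffices Submodule.span ℝ {a, b} ≤ LinearMap.ker (φ - s • (J w).comp ι) by
      rwa [Submodule.span_pair_eq_of_finrank_eq_two hradI ha hb ha0 hba] at this
    rw [Submodule.span_le, Set.insert_subset_iff, Set.singleton_subset_iff]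
    refine ⟨by simp [hφ, apply_marking_eq_zero hJ hrad], ?_⟩
    simp [s, div_mul_cancel₀ _ hwb]
  refine ⟨s • w + ι z, fun x => ?_⟩
  simp [hres, hz]

end Forms

theorem hyperbolicExtension_unique_general
    {F : Type*} [AddCommGroup F] [Module ℝ F] [FiniteDimensional ℝ F]
    (l : ℕ) (hdim : Module.finrank ℝ F = l + 2)
    (I : F →ₗ[ℝ] F →ₗ[ℝ] ℝ)
    (hsymm : ∀ x y, I x y = I y x)
    (hrad : Module.finrank ℝ ↥(bilinRadical I) = 2)
    -- a signed marking `a`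
    (a : F) (ha0 : a ≠ 0) (harad : a ∈ bilinRadical I)
    -- two hyperbolic extensions `(F¹,I¹)` and `(F²,I²)`
    {F₁ : Type*} [AddCommGroup F₁] [Module ℝ F₁] [FiniteDimensional ℝ F₁]
    (hdim₁ : Module.finrank ℝ F₁ = l + 3)
    (ι₁ : F →ₗ[ℝ] F₁) (hι₁ : Function.Injective ι₁)
    (I₁ : F₁ →ₗ[ℝ] F₁ →ₗ[ℝ] ℝ)
    (hsymm₁ : ∀ x y, I₁ x y = I₁ y x)
    (hres₁ : ∀ x y : F, I₁ (ι₁ x) (ι₁ y) = I x y)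
    (hrad₁ : bilinRadical I₁ = Submodule.span ℝ {ι₁ a})
    {F₂ : Type*} [AddCommGroup F₂] [Module ℝ F₂] [FiniteDimensional ℝ F₂]
    (hdim₂ : Module.finrank ℝ F₂ = l + 3)
    (ι₂ : F →ₗ[ℝ] F₂) (hι₂ : Function.Injective ι₂)
    (I₂ : F₂ →ₗ[ℝ] F₂ →ₗ[ℝ] ℝ)
    (hsymm₂ : ∀ x y, I₂ x y = I₂ y x)
    (hres₂ : ∀ x y : F, I₂ (ι₂ x) (ι₂ y) = I x y)
    (hrad₂ : bilinRadical I₂ = Submodule.span ℝ {ι₂ a}) :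
    ∃ ψ : F₁ ≃ₗ[ℝ] F₂,
      (∀ x : F, ψ (ι₁ x) = ι₂ x) ∧
      (∀ x y : F₁, I₂ (ψ x) (ψ y) = I₁ x y) := by
  have hd₁ : finrank ℝ F + 1 = finrank ℝ F₁ := by omega
  have hd₂ : finrank ℝ F + 1 = finrank ℝ F₂ := by omega
  obtain ⟨b, hb, hba⟩ :=
    Submodule.exists_mem_notMem_span_singleton (S := bilinRadical I) (by omega) a
  obtain ⟨w₁, hw₁⟩ := ι₁.exists_notMem_range hι₁ (by omega)
  have hw₁b : I₁ w₁ (ι₁ b) ≠ 0 := apply_radical_ne_zero hι₁ hd₁ hsymm₁ hres₁ hrad₁ hw₁ hb hba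
  obtain ⟨v, hv⟩ := exists_pairing_eq_of_apply_eq_zero hsymm hrad ha0 harad hι₂ hd₂ hsymm₂ hres₂
    hrad₂ hb hba ((I₁ w₁).comp ι₁) (apply_marking_eq_zero hsymm₁ hrad₁ w₁)
  obtain ⟨w₂, hpair, hnorm⟩ :=
    exists_pairing_eq_and_apply_self_eq hsymm₂ hres₂ hv hb hw₁b (I₁ w₁ w₁)
  exact exists_isometry_of_pairing_eq hι₁ hι₂ hd₁ hd₂ hsymm₁ hsymm₂
    (fun x y => by rw [hres₁, hres₂]) hw₁ (notMem_range_of_pairing_eq hsymm hres₂ hpair hb hw₁b)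
    hpair hnorm

/-- A hyperbolic extension of `(F,I)` (for an elliptic root system `R` with a
signed marking `a`) is unique up to an isomorphism which is the identity on `F`. -/
theorem hyperbolicExtension_unique
    {F : Type*} [AddCommGroup F] [Module ℝ F] [FiniteDimensional ℝ F]
    (l : ℕ) (hl : 1 ≤ l) (hdim : Module.finrank ℝ F = l + 2)
    (I : F →ₗ[ℝ] F →ₗ[ℝ] ℝ)
    (hsymm : ∀ x y, I x y = I y x)
    (hsemi : (∀ x, 0 ≤ I x x) ∨ (∀ x, I x x ≤ 0))
    (hrad : Module.finrank ℝ ↥(bilinRadical I) = 2)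
    (R : Set F)
    (hniso : ∀ α ∈ R, I α α ≠ 0)
    (hfull : Function.Bijective (latticeMap (AddSubgroup.closure R)))
    (hint : ∀ α ∈ R, ∀ β ∈ R, ∃ n : ℤ, I α (coroot I β) = n)
    (hrefl : ∀ α ∈ R, (fun u => u - (I u (coroot I α)) • α) '' R = R)
    (hirr : ∀ R₁ R₂ : Set F, R = R₁ ∪ R₂ →
      (∀ x ∈ R₁, ∀ y ∈ R₂, I x y = 0) → R₁ = ∅ ∨ R₂ = ∅)
    -- a signed marking `a`
    (a : F) (ha0 : a ≠ 0) (harad : a ∈ bilinRadical I)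
    (haQ : a ∈ AddSubgroup.closure R)
    (hamark : ∀ x ∈ AddSubgroup.closure R,
      (∃ r : ℝ, x = r • a) → ∃ n : ℤ, x = (n : ℤ) • a)
    -- two hyperbolic extensions `(F¹,I¹)` and `(F²,I²)`
    {F₁ : Type*} [AddCommGroup F₁] [Module ℝ F₁] [FiniteDimensional ℝ F₁]
    (hdim₁ : Module.finrank ℝ F₁ = l + 3)
    (ι₁ : F →ₗ[ℝ] F₁) (hι₁ : Function.Injective ι₁)
    (I₁ : F₁ →ₗ[ℝ] F₁ →ₗ[ℝ] ℝ)
    (hsymm₁ : ∀ x y, I₁ x y = I₁ y x)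
    (hres₁ : ∀ x y : F, I₁ (ι₁ x) (ι₁ y) = I x y)
    (hrad₁ : bilinRadical I₁ = Submodule.span ℝ {ι₁ a})
    {F₂ : Type*} [AddCommGroup F₂] [Module ℝ F₂] [FiniteDimensional ℝ F₂]
    (hdim₂ : Module.finrank ℝ F₂ = l + 3)
    (ι₂ : F →ₗ[ℝ] F₂) (hι₂ : Function.Injective ι₂)
    (I₂ : F₂ →ₗ[ℝ] F₂ →ₗ[ℝ] ℝ)
    (hsymm₂ : ∀ x y, I₂ x y = I₂ y x)
    (hres₂ : ∀ x y : F, I₂ (ι₂ x) (ι₂ y) = I x y)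
    (hrad₂ : bilinRadical I₂ = Submodule.span ℝ {ι₂ a}) :
    ∃ ψ : F₁ ≃ₗ[ℝ] F₂,
      (∀ x : F, ψ (ι₁ x) = ι₂ x) ∧
      (∀ x y : F₁, I₂ (ψ x) (ψ y) = I₁ x y) :=
  hyperbolicExtension_unique_general l hdim I hsymm hrad a ha0 harad hdim₁ ι₁ hι₁ I₁ hsymm₁ hres₁
    hrad₁ hdim₂ ι₂ hι₂ I₂ hsymm₂ hres₂ hrad₂
end

section
/- Let R be an elliptic root system belonging to (F,I). Then the set S := {c ∈ ℝ | c ≠ 0, the form cI is positive semi-definite on F, and cI(x,x) ∈ 2ℤ for every x ∈ Q(R)} is nonempty and contains a unique element of smallest absolute value (this element is denoted (I_R : I)). -/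
open scoped TensorProduct

/-!
Fix a root `α₀`. Irreducibility, together with the reflections, shows that every root length
`I(β,β)` is attained by a root `β'` not orthogonal to `α₀`. For non-orthogonal roots the Cartan
integers `n = ⟨α₀, β'^∨⟩`, `m = ⟨β', α₀^∨⟩` satisfy `0 < n m ≤ 4` by Cauchy–Schwarz, so
`I(β,β) / I(α₀,α₀) = m / n ∈ ℤ/12`. Hence `(24 / I(α₀,α₀)) I` is integral on `R × R` and even on
`R`, thus even on `Q(R)`, and `24 / I(α₀,α₀) ∈ S`. Every `c ∈ S` has `c I(α₀,α₀) ∈ 2ℤ_{>0}`, so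
`S` lies in a discrete set of numbers of one sign, and the smallest `|c|` is attained exactly once.
-/

section Lattice

variable {V : Type*} [AddCommGroup V]

lemma exists_int_eq_of_mem_closure {f : V →+ ℝ} {R : Set V} (hR : ∀ α ∈ R, ∃ n : ℤ, f α = n)
    {x : V} (hx : x ∈ AddSubgroup.closure R) : ∃ n : ℤ, f x = n := by
  induction hx using AddSubgroup.closure_induction with
  | mem α hα => exact hR α hα
  | zero => exact ⟨0, by simp⟩
  | add x y _ _ hx hy =>
    obtain ⟨m, hm⟩ := hx
    obtain ⟨n, hn⟩ := hy
    exact ⟨m + n, by simp [hm, hn]⟩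
  | neg x _ hx =>
    obtain ⟨n, hn⟩ := hx
    exact ⟨-n, by simp [hn]⟩

variable [Module ℝ V]

lemma nonempty_of_surjective_latticeMap [Nontrivial V] {R : Set V}
    (h : Function.Surjective (latticeMap (AddSubgroup.closure R))) : R.Nonempty := by
  rw [Set.nonempty_iff_ne_empty]
  rintro rfl
  rw [AddSubgroup.closure_empty] at h
  exact not_subsingleton V h.subsingleton

lemma exists_int_apply_eq_of_mem_closure (B : V →ₗ[ℝ] V →ₗ[ℝ] ℝ) {R : Set V}
    (hpair : ∀ α ∈ R, ∀ β ∈ R, ∃ n : ℤ, B α β = n) {x y : V}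
    (hx : x ∈ AddSubgroup.closure R) (hy : y ∈ AddSubgroup.closure R) : ∃ n : ℤ, B x y = n := by
  have hleft : ∀ α ∈ R, ∃ n : ℤ, B α y = n := fun α hα =>
    exists_int_eq_of_mem_closure (f := (B α).toAddMonoidHom) (hpair α hα) hy
  exact exists_int_eq_of_mem_closure (f := (B.flip y).toAddMonoidHom) hleft hx

lemma exists_int_apply_self_eq_two_mul_of_mem_closure (B : V →ₗ[ℝ] V →ₗ[ℝ] ℝ)
    (hsymm : ∀ x y, B x y = B y x) {R : Set V}
    (hpair : ∀ α ∈ R, ∀ β ∈ R, ∃ n : ℤ, B α β = n) (hdiag : ∀ α ∈ R, ∃ n : ℤ, B α α = 2 * n)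
    {x : V} (hx : x ∈ AddSubgroup.closure R) : ∃ n : ℤ, B x x = 2 * n := by
  induction hx using AddSubgroup.closure_induction with
  | mem α hα => exact hdiag α hα
  | zero => exact ⟨0, by simp⟩
  | add x y hx hy hxx hyy =>
    obtain ⟨a, ha⟩ := hxx
    obtain ⟨b, hb⟩ := hyy
    obtain ⟨p, hp⟩ := exists_int_apply_eq_of_mem_closure B hpair hx hy
    refine ⟨a + b + p, ?_⟩
    simp only [map_add, LinearMap.add_apply, ha, hb, hp, hsymm y x]
    push_cast
    ring
  | neg x _ hx =>
    obtain ⟨n, hn⟩ := hx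
    exact ⟨n, by simp [hn]⟩

end Lattice

lemma exists_min_abs_of_forall_mul_eq_natCast {S : Set ℝ} (hS : S.Nonempty) {a : ℝ} (ha : a ≠ 0)
    (hnat : ∀ c ∈ S, ∃ n : ℕ, c * a = n) :
    ∃ c₀ ∈ S, (∀ c ∈ S, |c₀| ≤ |c|) ∧ ∀ c ∈ S, |c| = |c₀| → c = c₀ := by
  classical
  have hex : ∃ n : ℕ, ∃ c ∈ S, c * a = n := by
    obtain ⟨c, hc⟩ := hS
    obtain ⟨n, hn⟩ := hnat c hc
    exact ⟨n, c, hc, hn⟩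
  obtain ⟨c₀, hc₀, hc₀a⟩ := Nat.find_spec hex
  have habs : ∀ c ∈ S, |c| = c * a / |a| := fun c hc => by
    obtain ⟨n, hn⟩ := hnat c hc
    rw [eq_div_iff (abs_ne_zero.mpr ha), ← abs_mul, hn, Nat.abs_cast]
  refine ⟨c₀, hc₀, fun c hc => ?_, fun c hc h => ?_⟩
  · obtain ⟨n, hn⟩ := hnat c hc
    rw [habs c hc, habs c₀ hc₀, hn, hc₀a]
    gcongr
    exact Nat.find_min' hex ⟨c, hc, hn⟩
  · rw [habs c hc, habs c₀ hc₀, div_left_inj' (abs_ne_zero.mpr ha)] at h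
    exact mul_right_cancel₀ ha h

lemma dvd_twelve_of_mul_pos_of_mul_le_four {n m : ℤ} (hpos : 0 < n * m) (hle : n * m ≤ 4) :
    n ∣ 12 := by
  have hhi : n ≤ 4 := (Int.le_of_dvd hpos (dvd_mul_right n m)).trans hle
  have hlo : -4 ≤ n :=
    neg_le.mp <| (Int.le_of_dvd hpos (neg_dvd.mpr (dvd_mul_right n m))).trans hle
  interval_cases n <;> first | decide | simp at hpos

section Roots

variable {V : Type*} [AddCommGroup V] [Module ℝ V] (I : V →ₗ[ℝ] V →ₗ[ℝ] ℝ)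

noncomputable def rootReflection (α u : V) : V := u - I u (coroot I α) • α

lemma apply_coroot (x α : V) : I x (coroot I α) = 2 * I x α / I α α := by
  simp only [coroot, map_smul, smul_eq_mul]
  ring

lemma apply_rootReflection (x α u : V) :
    I x (rootReflection I α u) = I x u - I u (coroot I α) * I x α := by
  simp [rootReflection]

lemma apply_rootReflection_rootReflection (hsymm : ∀ x y, I x y = I y x) {α : V} (hα : I α α ≠ 0)
    (u : V) : I (rootReflection I α u) (rootReflection I α u) = I u u := by
  simp only [rootReflection, apply_coroot, map_sub, map_smul, LinearMap.sub_apply,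
    LinearMap.smul_apply, smul_eq_mul, hsymm α u]
  field_simp
  ring

lemma apply_ne_zero_or_apply_rootReflection_ne_zero (hsymm : ∀ x y, I x y = I y x)
    {a c u : V} (hc : I c c ≠ 0) (hac : I a c ≠ 0) (hcu : I c u ≠ 0) :
    I a u ≠ 0 ∨ I a (rootReflection I c u) ≠ 0 := by
  by_contra! h
  obtain ⟨hau, hauc⟩ := h
  rw [apply_rootReflection, hau, apply_coroot, zero_sub, neg_eq_zero, hsymm u c] at hauc
  simp_all

lemma apply_mul_apply_le_of_semidef (hsemi : (∀ x, 0 ≤ I x x) ∨ (∀ x, I x x ≤ 0)) (x y : V) :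
    I x y * I y x ≤ I x x * I y y := by
  rcases hsemi with h | h
  · exact LinearMap.BilinForm.apply_mul_apply_le_of_forall_zero_le I h x y
  · simpa using LinearMap.BilinForm.apply_mul_apply_le_of_forall_zero_le (-I)
      (fun x => by simpa using h x) x y

lemma apply_self_div_apply_self_nonneg (hsemi : (∀ x, 0 ≤ I x x) ∨ (∀ x, I x x ≤ 0))
    (x α : V) : 0 ≤ I x x / I α α := by
  rcases hsemi with h | h
  · exact div_nonneg (h x) (h α)
  · exact div_nonneg_of_nonpos (h x) (h α)

lemma exists_int_twelve_mul_apply_self_eq (hsymm : ∀ x y, I x y = I y x)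
    (hsemi : (∀ x, 0 ≤ I x x) ∨ (∀ x, I x x ≤ 0)) {α β : V} (hαβ : I α β ≠ 0)
    (hn : ∃ n : ℤ, I α (coroot I β) = n) (hm : ∃ m : ℤ, I β (coroot I α) = m) :
    ∃ k : ℤ, 12 * I β β = k * I α α := by
  obtain ⟨n, hn⟩ := hn
  obtain ⟨m, hm⟩ := hm
  have hcs := apply_mul_apply_le_of_semidef I hsemi α β
  rw [← hsymm α β] at hcs
  have hsq : 0 < I α β * I α β := mul_self_pos.mpr hαβ
  have hα : I α α ≠ 0 := by rintro h; rw [h, zero_mul] at hcs; linarith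
  have hβ : I β β ≠ 0 := by rintro h; rw [h, mul_zero] at hcs; linarith
  rw [apply_coroot, div_eq_iff hβ] at hn
  rw [apply_coroot, div_eq_iff hα, hsymm β α] at hm
  have hnm : ((n * m : ℤ) : ℝ) * (I α α * I β β) = 4 * (I α β * I α β) := by
    push_cast
    linear_combination (-(m : ℝ) * I α α) * hn - 2 * I α β * hm
  have hpos : 0 < n * m := by
    have : (0 : ℝ) < (n * m : ℤ) := by nlinarith
    exact_mod_cast this
  have hle : n * m ≤ 4 := by
    have : ((n * m : ℤ) : ℝ) ≤ 4 := by nlinarith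
    exact_mod_cast this
  obtain ⟨q, hq⟩ := dvd_twelve_of_mul_pos_of_mul_le_four hpos hle
  refine ⟨q * m, ?_⟩
  have hq' : (12 : ℝ) = n * q := by exact_mod_cast hq
  push_cast
  linear_combination I β β * hq' + (q : ℝ) * (hm - hn)

lemma exists_apply_self_eq_apply_ne_zero_of_irreducible (hsymm : ∀ x y, I x y = I y x)
    {R : Set V} (hniso : ∀ α ∈ R, I α α ≠ 0) (hrefl : ∀ α ∈ R, rootReflection I α '' R = R)
    (hirr : ∀ R₁ R₂ : Set V, R = R₁ ∪ R₂ →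
      (∀ x ∈ R₁, ∀ y ∈ R₂, I x y = 0) → R₁ = ∅ ∨ R₂ = ∅)
    {α β : V} (hα : α ∈ R) (hβ : β ∈ R) : ∃ β' ∈ R, I β' β' = I β β ∧ I α β' ≠ 0 := by
  set T := {a ∈ R | ∃ β' ∈ R, I β' β' = I β β ∧ I a β' ≠ 0}
  have hβT : β ∈ T := ⟨hβ, β, hβ, rfl, hniso β hβ⟩
  have horth : ∀ x ∈ T, ∀ y ∈ R \ T, I x y = 0 := by
    rintro x ⟨hx, β₁, hβ₁, hβ₁β, hxβ₁⟩ y ⟨hy, hyT⟩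
    by_contra hxy
    refine hyT ⟨hy, ?_⟩
    rcases apply_ne_zero_or_apply_rootReflection_ne_zero I hsymm (hniso x hx)
      (hsymm y x ▸ hxy) hxβ₁ with h | h
    · exact ⟨β₁, hβ₁, hβ₁β, h⟩
    · exact ⟨_, hrefl x hx ▸ Set.mem_image_of_mem _ hβ₁,
        (apply_rootReflection_rootReflection I hsymm (hniso x hx) β₁).trans hβ₁β, h⟩
  rcases hirr T (R \ T) (Set.union_sdiff_cancel (Set.sep_subset _ _)).symm horth with h | h
  · rw [h] at hβT
    exact absurd hβT (Set.notMem_empty β)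
  · exact (Set.sdiff_eq_empty.mp h hα).2

lemma exists_int_div_mul_apply_self_eq_two_mul_of_mem_closure (hsymm : ∀ x y, I x y = I y x)
    {R : Set V} (hniso : ∀ α ∈ R, I α α ≠ 0)
    (hint : ∀ α ∈ R, ∀ β ∈ R, ∃ n : ℤ, I α (coroot I β) = n) {a : ℝ} (ha : a ≠ 0)
    (hnorm : ∀ β ∈ R, ∃ k : ℤ, 12 * I β β = k * a) {x : V} (hx : x ∈ AddSubgroup.closure R) :
    ∃ n : ℤ, 24 / a * I x x = 2 * n := by
  have h := exists_int_apply_self_eq_two_mul_of_mem_closure ((24 / a) • I)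
    (fun x y => by simp [hsymm x y]) ?_ ?_ hx
  · simpa using h
  · intro α hα β hβ
    obtain ⟨n, hn⟩ := hint α hα β hβ
    obtain ⟨k, hk⟩ := hnorm β hβ
    rw [apply_coroot, div_eq_iff (hniso β hβ)] at hn
    refine ⟨n * k, ?_⟩
    simp only [LinearMap.smul_apply, smul_eq_mul, Int.cast_mul]
    field_simp
    linear_combination 12 * hn + n * hk
  · intro β hβ
    obtain ⟨k, hk⟩ := hnorm β hβ
    refine ⟨k, ?_⟩
    simp only [LinearMap.smul_apply, smul_eq_mul]
    field_simp
    linear_combination 2 * hk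

end Roots

theorem exists_unique_normalization_constant_general
    {F : Type*} [AddCommGroup F] [Module ℝ F]
    (l : ℕ) (hdim : Module.finrank ℝ F = l + 2)
    (I : F →ₗ[ℝ] F →ₗ[ℝ] ℝ)
    (hsymm : ∀ x y, I x y = I y x)
    (hsemi : (∀ x, 0 ≤ I x x) ∨ (∀ x, I x x ≤ 0))
    (R : Set F)
    (hniso : ∀ α ∈ R, I α α ≠ 0)
    (hfull : Function.Bijective (latticeMap (AddSubgroup.closure R)))
    (hint : ∀ α ∈ R, ∀ β ∈ R, ∃ n : ℤ, I α (coroot I β) = n)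
    (hrefl : ∀ α ∈ R, (fun u => u - (I u (coroot I α)) • α) '' R = R)
    (hirr : ∀ R₁ R₂ : Set F, R = R₁ ∪ R₂ →
      (∀ x ∈ R₁, ∀ y ∈ R₂, I x y = 0) → R₁ = ∅ ∨ R₂ = ∅)
    (S : Set ℝ)
    (hS : S = {c : ℝ | c ≠ 0 ∧ (∀ x : F, 0 ≤ c * I x x) ∧
      (∀ x ∈ AddSubgroup.closure R, ∃ n : ℤ, c * I x x = 2 * n)}) :
    S.Nonempty ∧
    ∃ c₀ ∈ S, (∀ c ∈ S, |c₀| ≤ |c|) ∧ (∀ c ∈ S, |c| = |c₀| → c = c₀) := by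
  have : Nontrivial F := Module.nontrivial_of_finrank_pos (R := ℝ) (by omega)
  obtain ⟨α₀, hα₀⟩ := nonempty_of_surjective_latticeMap hfull.2
  have hα₀₀ := hniso α₀ hα₀
  have hnorm : ∀ β ∈ R, ∃ k : ℤ, 12 * I β β = k * I α₀ α₀ := fun β hβ => by
    obtain ⟨β', hβ', hβ'β, hα₀β'⟩ :=
      exists_apply_self_eq_apply_ne_zero_of_irreducible I hsymm hniso hrefl hirr hα₀ hβ
    rw [← hβ'β]
    exact exists_int_twelve_mul_apply_self_eq I hsymm hsemi hα₀β' (hint α₀ hα₀ β' hβ')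
      (hint β' hβ' α₀ hα₀)
  have hmem : 24 / I α₀ α₀ ∈ S := by
    refine hS ▸ ⟨by positivity, fun x => ?_, fun x hx => ?_⟩
    · rw [div_mul_comm]
      exact mul_nonneg (apply_self_div_apply_self_nonneg I hsemi x α₀) (by norm_num)
    · exact exists_int_div_mul_apply_self_eq_two_mul_of_mem_closure I hsymm hniso hint hα₀₀
        hnorm hx
  refine ⟨⟨_, hmem⟩, exists_min_abs_of_forall_mul_eq_natCast ⟨_, hmem⟩ (a := I α₀ α₀ / 2)
    (by positivity) fun c hc => ?_⟩
  rw [hS] at hc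
  obtain ⟨n, hn⟩ := hc.2.2 α₀ (AddSubgroup.subset_closure hα₀)
  have hn0 : (0 : ℝ) ≤ n := by linarith [hc.2.1 α₀]
  lift n to ℕ using by exact_mod_cast hn0
  exact ⟨n, by rw [← mul_div_assoc, hn]; push_cast; ring⟩

/-- For an elliptic root system `R` belonging to `(F,I)`, the set
`S = {c ≠ 0 | cI is positive semi-definite and cI(x,x) ∈ 2ℤ on Q(R)}`
is nonempty and has a unique element of smallest absolute value,
denoted `(I_R : I)`. -/
theorem exists_unique_normalization_constant
    {F : Type*} [AddCommGroup F] [Module ℝ F] [FiniteDimensional ℝ F]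
    (l : ℕ) (hl : 1 ≤ l) (hdim : Module.finrank ℝ F = l + 2)
    (I : F →ₗ[ℝ] F →ₗ[ℝ] ℝ)
    (hsymm : ∀ x y, I x y = I y x)
    (hsemi : (∀ x, 0 ≤ I x x) ∨ (∀ x, I x x ≤ 0))
    (hrad : Module.finrank ℝ ↥(bilinRadical I) = 2)
    (R : Set F)
    (hniso : ∀ α ∈ R, I α α ≠ 0)
    (hfull : Function.Bijective (latticeMap (AddSubgroup.closure R)))
    (hint : ∀ α ∈ R, ∀ β ∈ R, ∃ n : ℤ, I α (coroot I β) = n)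
    (hrefl : ∀ α ∈ R, (fun u => u - (I u (coroot I α)) • α) '' R = R)
    (hirr : ∀ R₁ R₂ : Set F, R = R₁ ∪ R₂ →
      (∀ x ∈ R₁, ∀ y ∈ R₂, I x y = 0) → R₁ = ∅ ∨ R₂ = ∅)
    (S : Set ℝ)
    (hS : S = {c : ℝ | c ≠ 0 ∧ (∀ x : F, 0 ≤ c * I x x) ∧
      (∀ x ∈ AddSubgroup.closure R, ∃ n : ℤ, c * I x x = 2 * n)}) :
    S.Nonempty ∧
    ∃ c₀ ∈ S, (∀ c ∈ S, |c₀| ≤ |c|) ∧ (∀ c ∈ S, |c| = |c₀| → c = c₀) :=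
  exists_unique_normalization_constant_general l hdim I hsymm hsemi R hniso hfull hint hrefl hirr S
    hS
end

section
/- Let R₀ be a commutative ring, m ≥ 1, and let w : Fin m → ℕ be weights with w(i) > 0 for every i. Equip the polynomial ring A := R₀[X₁,…,X_m] (multivariate polynomials) with the weighted grading in which X_j has weight w(j). Let t₁,…,t_m ∈ A be such that each t_i is weighted homogeneous of weighted degree w(i). If the determinant of the Jacobian matrix (∂t_i/∂X_j)_{1≤i,j≤m} is a unit of A, then the R₀-algebra endomorphism of A determined by X_i ↦ t_i is bijective; in particular R₀[t₁,…,t_m] = R₀[X₁,…,X_m], i.e. t₁,…,t_m generate A as an R₀-algebra. -/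
/-!
Let `𝔪 = (X₁, …, X_m)`. Evaluating the Jacobian at the origin gives the matrix `L` of linear
coefficients of the `tᵢ`, so `L` is invertible; by homogeneity `L` only links variables of equal
weight, hence so does `L⁻¹`. Thus `s = L⁻¹ t` is again weighted homogeneous with `sᵢ ≡ Xᵢ mod 𝔪²`,
and `aeval t = aeval s ∘ aeval (L X)` with `aeval (L X)` a linear change of variables.
Write `aeval s = 1 + N`. Then `N` preserves weighted degree and maps `𝔪ⁿ` into `𝔪ⁿ⁺¹`; as the
weights are positive, the ordinary degree of a monomial is at most its weight, so `N` kills a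
weighted homogeneous polynomial of weight `n` after `n + 1` steps. A locally nilpotent `N` makes
`1 + N` bijective, with inverse the (pointwise finite) geometric series `∑ (-N)ⁱ`.
-/

theorem Module.End.bijective_one_add_of_exists_pow_apply_eq_zero {R M : Type*} [Ring R]
    [AddCommGroup M] [Module R M] (N : Module.End R M) (hN : ∀ x, ∃ k, (N ^ k) x = 0) :
    Function.Bijective ⇑(1 + N) := by
  have hneg : ∀ x k, (N ^ k) x = 0 → ((-N) ^ k) x = 0 := fun x k hx => by
    rw [neg_pow, Module.End.mul_apply, hx, map_zero]
  constructor
  · refine (injective_iff_map_eq_zero _).mpr fun x hx => ?_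
    obtain ⟨k, hk⟩ := hN x
    have hgeom := geom_sum_mul_neg (-N) k
    rw [sub_neg_eq_add] at hgeom
    calc x = (1 - (-N) ^ k) x := by simp [hneg x k hk]
      _ = 0 := by rw [← hgeom, Module.End.mul_apply, hx, map_zero]
  · intro y
    obtain ⟨k, hk⟩ := hN y
    have hgeom := mul_neg_geom_sum (-N) k
    rw [sub_neg_eq_add] at hgeom
    exact ⟨(∑ i ∈ Finset.range k, (-N) ^ i) y, by
      rw [← Module.End.mul_apply, hgeom]; simp [hneg y k hk]⟩

theorem Finsupp.degree_le_weight {σ : Type*} {w : σ → ℕ} (hw : ∀ i, 0 < w i)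
    (d : σ →₀ ℕ) : d.degree ≤ weight w d := by
  rw [degree_eq_weight_one, weight_apply, weight_apply]
  exact Finset.sum_le_sum fun i _ => by simpa using Nat.mul_le_mul_left (d i) (hw i)

theorem Matrix.inv_apply_eq_zero_of_ne {ι R α : Type*} [Fintype ι] [DecidableEq ι]
    [CommRing R] [LinearOrder α] {b : ι → α} {L : Matrix ι ι R}
    (hL : ∀ i j, b i ≠ b j → L i j = 0) (hdet : IsUnit L.det) {i j : ι} (hij : b i ≠ b j) :
    L⁻¹ i j = 0 := by
  let := L.invertibleOfIsUnitDet hdet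
  rcases hij.lt_or_gt with h | h
  · exact blockTriangular_inv_of_blockTriangular (b := OrderDual.toDual ∘ b)
      (fun i j hij => hL i j hij.ne') h
  · exact blockTriangular_inv_of_blockTriangular (b := b) (fun i j hij => hL i j hij.ne') h

namespace MvPolynomial

variable {σ R : Type*} [CommRing R]

section idealOfVars

variable {φ : MvPolynomial σ R →ₐ[R] MvPolynomial σ R}

theorem algHom_apply_sub_mem_idealOfVars (hφ : ∀ i, φ (X i) - X i ∈ idealOfVars σ R)
    (f : MvPolynomial σ R) : φ f - f ∈ idealOfVars σ R := by
  rw [← Ideal.Quotient.eq, ← Ideal.Quotient.mkₐ_eq_mk R, ← AlgHom.comp_apply]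
  congr 1
  exact algHom_ext fun i => Ideal.Quotient.eq.mpr (hφ i)

theorem algHom_apply_sub_mem_idealOfVars_sq (hφ : ∀ i, φ (X i) - X i ∈ idealOfVars σ R ^ 2)
    {f : MvPolynomial σ R} (hf : f ∈ idealOfVars σ R) : φ f - f ∈ idealOfVars σ R ^ 2 := by
  have hφ₁ : ∀ g, φ g - g ∈ idealOfVars σ R :=
    algHom_apply_sub_mem_idealOfVars fun i => Ideal.pow_le_self two_ne_zero (hφ i)
  induction hf using Submodule.span_induction with
  | mem _ hx =>
    obtain ⟨i, rfl⟩ := hx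
    exact hφ i
  | zero => simp
  | add a b _ _ ha hb =>
    rw [map_add, add_sub_add_comm]
    exact add_mem ha hb
  | smul g b hb ih =>
    have hφb : φ b ∈ idealOfVars σ R := by simpa using add_mem (hφ₁ b) hb
    rw [smul_eq_mul, map_mul, show φ g * φ b - g * b = (φ g - g) * φ b + g * (φ b - b) by ring]
    exact add_mem (pow_two (idealOfVars σ R) ▸ Ideal.mul_mem_mul (hφ₁ g) hφb)
      (Ideal.mul_mem_left _ g ih)

theorem algHom_apply_sub_mem_pow_idealOfVars_succ
    (hφ : ∀ i, φ (X i) - X i ∈ idealOfVars σ R ^ 2) (n : ℕ) {f : MvPolynomial σ R}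
    (hf : f ∈ idealOfVars σ R ^ n) :
    φ f - f ∈ idealOfVars σ R ^ (n + 1) := by
  induction n generalizing f with
  | zero =>
    simpa using
      algHom_apply_sub_mem_idealOfVars (fun i => Ideal.pow_le_self two_ne_zero (hφ i)) f
  | succ n ih =>
    rw [pow_succ] at hf
    refine Submodule.mul_induction_on hf (fun a ha b hb => ?_) fun a b ha hb => ?_
    · have hb₂ := algHom_apply_sub_mem_idealOfVars_sq hφ hb
      have hφb : φ b ∈ idealOfVars σ R := by
        simpa using add_mem (Ideal.pow_le_self two_ne_zero hb₂) hb
      rw [map_mul, show φ a * φ b - a * b = (φ a - a) * φ b + a * (φ b - b) by ring]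
      refine add_mem ?_ ?_
      · exact pow_succ (idealOfVars σ R) (n + 1) ▸ Ideal.mul_mem_mul (ih ha) hφb
      · exact pow_add (idealOfVars σ R) n 2 ▸ Ideal.mul_mem_mul ha hb₂
    · rw [map_add, add_sub_add_comm]
      exact add_mem ha hb

end idealOfVars

section weighted

variable {w : σ → ℕ}

theorem IsWeightedHomogeneous.aeval {s : σ → MvPolynomial σ R}
    (hs : ∀ i, (s i).IsWeightedHomogeneous w (w i)) {p : MvPolynomial σ R} {n : ℕ}
    (hp : p.IsWeightedHomogeneous w n) : (aeval s p).IsWeightedHomogeneous w n := by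
  induction hp using IsWeightedHomogeneous.induction_on with
  | zero => simpa using isWeightedHomogeneous_zero R w n
  | add p q _ _ hp hq => simpa using hp.add hq
  | monomial d r hd =>
    rw [aeval_monomial, ← hd, Finsupp.weight_apply, algebraMap_eq]
    exact (IsWeightedHomogeneous.prod _ _ _ fun i _ => (hs i).pow (d i)).C_mul r

theorem IsWeightedHomogeneous.eq_zero_of_mem_pow_idealOfVars (hw : ∀ i, 0 < w i)
    {p : MvPolynomial σ R} {n : ℕ} (hp : p.IsWeightedHomogeneous w n)
    (hpI : p ∈ idealOfVars σ R ^ (n + 1)) : p = 0 := by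
  refine support_eq_empty.mp (Finset.eq_empty_of_forall_notMem fun d hd => ?_)
  have h₁ := (mem_pow_idealOfVars_iff _ _).mp hpI d hd
  have h₂ := hp (mem_support_iff.mp hd)
  have h₃ := Finsupp.degree_le_weight hw d
  omega

variable {s : σ → MvPolynomial σ R}

theorem exists_pow_aeval_sub_one_apply_eq_zero (hw : ∀ i, 0 < w i)
    (hsX : ∀ i, s i - X i ∈ idealOfVars σ R ^ 2)
    (hs : ∀ i, (s i).IsWeightedHomogeneous w (w i)) (f : MvPolynomial σ R) :
    ∃ k, (((aeval s).toLinearMap - 1 : Module.End R (MvPolynomial σ R)) ^ k) f = 0 := by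
  set N : Module.End R (MvPolynomial σ R) := (aeval s).toLinearMap - 1
  have hφX : ∀ i, aeval s (X i : MvPolynomial σ R) - X i ∈ idealOfVars σ R ^ 2 := by
    simpa using hsX
  have hNpow : ∀ {n : ℕ} {p : MvPolynomial σ R}, p.IsWeightedHomogeneous w n →
      ∀ k, ((N ^ k) p).IsWeightedHomogeneous w n ∧ (N ^ k) p ∈ idealOfVars σ R ^ k := by
    intro n p hp k
    induction k with
    | zero => simpa using hp
    | succ k ih =>
      rw [pow_succ', Module.End.mul_apply]
      exact ⟨(ih.1.aeval hs).sub ih.1,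
        algHom_apply_sub_mem_pow_idealOfVars_succ hφX k ih.2⟩
  induction f using induction_on' with
  | monomial d r =>
    have hd := isWeightedHomogeneous_monomial w d r rfl
    exact ⟨_, (hNpow hd _).1.eq_zero_of_mem_pow_idealOfVars hw (hNpow hd _).2⟩
  | add p q hp hq =>
    obtain ⟨a, ha⟩ := hp
    obtain ⟨b, hb⟩ := hq
    refine ⟨a + b, ?_⟩
    rw [map_add, Module.End.pow_map_zero_of_le (by omega) ha,
      Module.End.pow_map_zero_of_le (by omega) hb, add_zero]

theorem bijective_aeval_of_sub_X_mem_idealOfVars_sq (hw : ∀ i, 0 < w i)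
    (hsX : ∀ i, s i - X i ∈ idealOfVars σ R ^ 2)
    (hs : ∀ i, (s i).IsWeightedHomogeneous w (w i)) :
    Function.Bijective (aeval s : MvPolynomial σ R →ₐ[R] MvPolynomial σ R) := by
  simpa using Module.End.bijective_one_add_of_exists_pow_apply_eq_zero _
    (exists_pow_aeval_sub_one_apply_eq_zero hw hsX hs)

end weighted

section linear

open scoped Matrix

variable [Fintype σ]

theorem aeval_comp_aeval_mulVec_X (P : Matrix σ σ R) (v : σ → MvPolynomial σ R) :
    (aeval v).comp (aeval (P.map C *ᵥ X)) = aeval (P.map C *ᵥ v) :=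
  algHom_ext fun i => by simp [Matrix.mulVec, dotProduct, algebraMap_eq]

theorem aeval_mulVec_X_comp_aeval_mulVec_X_of_mul_eq_one [DecidableEq σ] {P Q : Matrix σ σ R}
    (hPQ : P * Q = 1) :
    (aeval (Q.map C *ᵥ X)).comp (aeval (P.map C *ᵥ X)) = AlgHom.id R (MvPolynomial σ R) := by
  rw [aeval_comp_aeval_mulVec_X, Matrix.mulVec_mulVec, ← Matrix.map_mul, hPQ,
    Matrix.map_one _ (map_zero C) (map_one C), Matrix.one_mulVec, aeval_X_left]

theorem bijective_aeval_mulVec_X [DecidableEq σ] {P : Matrix σ σ R} (hP : IsUnit P.det) :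
    Function.Bijective (aeval (P.map C *ᵥ X) : MvPolynomial σ R →ₐ[R] MvPolynomial σ R) :=
  (AlgEquiv.ofAlgHom _ (aeval (P⁻¹.map C *ᵥ X))
    (aeval_mulVec_X_comp_aeval_mulVec_X_of_mul_eq_one (P.nonsing_inv_mul hP))
    (aeval_mulVec_X_comp_aeval_mulVec_X_of_mul_eq_one (P.mul_nonsing_inv hP))).bijective

end linear

theorem constantCoeff_pderiv (i : σ) (p : MvPolynomial σ R) :
    constantCoeff (pderiv i p) = coeff (Finsupp.single i 1) p := by
  simp [constantCoeff_eq, coeff_pderiv]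

noncomputable def linearCoeffMatrix (t : σ → MvPolynomial σ R) : Matrix σ σ R :=
  Matrix.of fun i j => coeff (Finsupp.single j 1) (t i)

section linearCoeffMatrix

open scoped Matrix

variable {t : σ → MvPolynomial σ R} {w : σ → ℕ}

theorem sub_X_mem_idealOfVars_sq [DecidableEq σ] (ht0 : ∀ i, coeff 0 (t i) = 0)
    (ht1 : linearCoeffMatrix t = 1) (i : σ) : t i - X i ∈ idealOfVars σ R ^ 2 := by
  refine (mem_pow_idealOfVars_iff' _ _).mpr fun d hd => ?_
  obtain hd0 | hd1 : d.degree = 0 ∨ d.degree = 1 := by omega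
  · simp [(Finsupp.degree_eq_zero_iff d).mp hd0, ht0]
  · obtain ⟨k, rfl⟩ : d ∈ Set.range (Finsupp.single · 1) := Finsupp.range_single_one ▸ hd1
    have := congrFun (congrFun ht1 i) k
    simp only [linearCoeffMatrix, Matrix.of_apply] at this
    simp [this, coeff_X, Matrix.one_apply, Finsupp.single_left_inj one_ne_zero]

theorem linearCoeffMatrix_apply_eq_zero (ht : ∀ i, (t i).IsWeightedHomogeneous w (w i))
    {i j : σ} (hij : w i ≠ w j) : linearCoeffMatrix t i j = 0 := by
  by_contra h
  exact hij (by simpa [Finsupp.weight_single] using (ht i h).symm)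

variable [Fintype σ]

theorem isUnit_det_linearCoeffMatrix [DecidableEq σ]
    (hJ : IsUnit (Matrix.of fun i j => pderiv j (t i)).det) : IsUnit (linearCoeffMatrix t).det := by
  have := hJ.map (constantCoeff : MvPolynomial σ R →+* R)
  rw [RingHom.map_det] at this
  convert this using 2
  ext i j
  simp [linearCoeffMatrix, constantCoeff_pderiv]

theorem linearCoeffMatrix_mulVec (P : Matrix σ σ R) :
    linearCoeffMatrix (P.map C *ᵥ t) = P * linearCoeffMatrix t := by
  ext i k
  simp [linearCoeffMatrix, Matrix.mulVec, dotProduct, coeff_sum, Matrix.mul_apply]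

theorem isWeightedHomogeneous_mulVec {P : Matrix σ σ R} (hP : ∀ i j, w i ≠ w j → P i j = 0)
    (ht : ∀ i, (t i).IsWeightedHomogeneous w (w i)) (i : σ) :
    ((P.map C *ᵥ t) i).IsWeightedHomogeneous w (w i) := by
  refine IsWeightedHomogeneous.sum _ _ _ fun j _ => ?_
  by_cases h : w i = w j
  · simpa [h] using (ht j).C_mul (P i j)
  · simpa [hP i j h] using isWeightedHomogeneous_zero R w (w i)

end linearCoeffMatrix

end MvPolynomial

theorem weightedHomogeneous_jacobianUnit_bijective_general
    (R₀ : Type*) [CommRing R₀] (m : ℕ)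
    (w : Fin m → ℕ) (hw : ∀ i, 0 < w i)
    (t : Fin m → MvPolynomial (Fin m) R₀)
    (ht : ∀ i, (t i).IsWeightedHomogeneous w (w i))
    (hJ : IsUnit (Matrix.det (Matrix.of fun i j => MvPolynomial.pderiv j (t i)))) :
    Function.Bijective
      (⇑(MvPolynomial.aeval t :
          MvPolynomial (Fin m) R₀ →ₐ[R₀] MvPolynomial (Fin m) R₀)) ∧
    Algebra.adjoin R₀ (Set.range t) = ⊤ := by
  open MvPolynomial Matrix in
  set L := linearCoeffMatrix t
  have hL : IsUnit L.det := isUnit_det_linearCoeffMatrix hJ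
  set s := L⁻¹.map C *ᵥ t
  have hs : ∀ i, (s i).IsWeightedHomogeneous w (w i) :=
    isWeightedHomogeneous_mulVec
      (fun _ _ => inv_apply_eq_zero_of_ne (fun _ _ => linearCoeffMatrix_apply_eq_zero ht) hL) ht
  have hsX : ∀ i, s i - X i ∈ idealOfVars (Fin m) R₀ ^ 2 :=
    sub_X_mem_idealOfVars_sq (fun i => (hs i).coeff_eq_zero 0 (by simpa using (hw i).ne))
      (by rw [linearCoeffMatrix_mulVec, nonsing_inv_mul _ hL])
  have hst : L.map C *ᵥ s = t := by
    rw [mulVec_mulVec, ← Matrix.map_mul, mul_nonsing_inv _ hL,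
      Matrix.map_one _ (map_zero C) (map_one C), one_mulVec]
  have hbij : Function.Bijective (aeval t : MvPolynomial (Fin m) R₀ →ₐ[R₀] _) := by
    rw [← hst, ← aeval_comp_aeval_mulVec_X]
    exact (bijective_aeval_of_sub_X_mem_idealOfVars_sq hw hsX hs).comp
      (bijective_aeval_mulVec_X hL)
  refine ⟨hbij, ?_⟩
  rw [Algebra.adjoin_range_eq_range_aeval, AlgHom.range_eq_top]
  exact hbij.surjective

/-- If `t₁,…,t_m` are weighted homogeneous polynomials of the same weighted degrees
`w(1),…,w(m)` as the variables `X₁,…,X_m` (all weights positive) and the Jacobian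
determinant `det(∂t_i/∂X_j)` is a unit, then the endomorphism `X_i ↦ t_i` of
`R₀[X₁,…,X_m]` is bijective; in particular `t₁,…,t_m` generate `R₀[X₁,…,X_m]`
as an `R₀`-algebra. -/
theorem weightedHomogeneous_jacobianUnit_bijective
    (R₀ : Type*) [CommRing R₀] (m : ℕ) (hm : 1 ≤ m)
    (w : Fin m → ℕ) (hw : ∀ i, 0 < w i)
    (t : Fin m → MvPolynomial (Fin m) R₀)
    (ht : ∀ i, (t i).IsWeightedHomogeneous w (w i))
    (hJ : IsUnit (Matrix.det (Matrix.of fun i j => MvPolynomial.pderiv j (t i)))) :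
    Function.Bijective
      (⇑(MvPolynomial.aeval t :
          MvPolynomial (Fin m) R₀ →ₐ[R₀] MvPolynomial (Fin m) R₀)) ∧
    Algebra.adjoin R₀ (Set.range t) = ⊤ :=
  weightedHomogeneous_jacobianUnit_bijective_general R₀ m w hw t ht hJ
end

section
/- Let A be a commutative ring, n ≥ 1, let n₀ be a fixed index in an index set of size n, let c ∈ A, and let d be a function from the index set to A with d(n₀) = 0 and d(β) a unit of A for every β ≠ n₀. Let Γ^{αβ}_γ ∈ A (for indices α,β,γ) satisfy: (i) Γ^{α n₀}_γ = 0 for all α,γ; and (ii) the quadratic relations Σ_γ Γ^{αβ}_γ Γ^{γδ}_μ = Σ_γ Γ^{αδ}_γ Γ^{γβ}_μ for all α,β,δ,μ. Define Ĉ^{αβ}_γ := d(β)^{−1}·Γ^{αβ}_γ when β ≠ n₀, and Ĉ^{α n₀}_γ := c·δ^α_γ (Kronecker delta). Then Σ_γ Ĉ^{αβ}_γ Ĉ^{γδ}_μ = Σ_γ Ĉ^{αδ}_γ Ĉ^{γβ}_μ for all α,β,δ,μ. -/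
/-- If the Christoffel symbols `Γ^{αβ}_γ` satisfy `Γ^{αn₀}_γ = 0` and the quadratic
relations `Σ_γ Γ^{αβ}_γ Γ^{γδ}_μ = Σ_γ Γ^{αδ}_γ Γ^{γβ}_μ`, and `d(n₀) = 0` while
`d(β)` is a unit for `β ≠ n₀`, then the structure coefficients
`Ĉ^{αβ}_γ = d(β)⁻¹ Γ^{αβ}_γ` (for `β ≠ n₀`) and `Ĉ^{αn₀}_γ = c·δ^α_γ`
satisfy the same quadratic (associativity) relations. -/
theorem structureCoeffs_assoc
    {A : Type*} [CommRing A] {n : ℕ} (hn : 1 ≤ n) (n₀ : Fin n)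
    (c : A) (d : Fin n → A)
    (hd0 : d n₀ = 0) (hdu : ∀ β : Fin n, β ≠ n₀ → IsUnit (d β))
    (Γ : Fin n → Fin n → Fin n → A)
    (h1 : ∀ α γ : Fin n, Γ α n₀ γ = 0)
    (h2 : ∀ α β δ μ : Fin n,
      ∑ γ : Fin n, Γ α β γ * Γ γ δ μ = ∑ γ : Fin n, Γ α δ γ * Γ γ β μ)
    (C : Fin n → Fin n → Fin n → A)
    (hC : ∀ α β γ : Fin n,
      C α β γ = if β = n₀ then (c * if α = γ then 1 else 0)
                else Ring.inverse (d β) * Γ α β γ) :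
    ∀ α β δ μ : Fin n,
      ∑ γ : Fin n, C α β γ * C γ δ μ = ∑ γ : Fin n, C α δ γ * C γ β μ := by
  intro α β δ μ
  by_cases hβ : β = n₀ <;> by_cases hδ : δ = n₀
  · subst hβ; subst hδ
    simp [hC, mul_ite, ite_mul, mul_zero, zero_mul, mul_one, one_mul,
      Finset.sum_ite_eq, Finset.sum_ite_eq']
  · subst hβ
    simp only [hC, if_pos rfl, if_neg hδ, mul_ite, ite_mul, mul_zero, zero_mul,
      mul_one, one_mul, Finset.sum_ite_eq, Finset.sum_ite_eq', Finset.mem_univ,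
      if_true]
    ring
  · subst hδ
    simp only [hC, if_pos rfl, if_neg hβ, mul_ite, ite_mul, mul_zero, zero_mul,
      mul_one, one_mul, Finset.sum_ite_eq, Finset.sum_ite_eq', Finset.mem_univ,
      if_true]
    ring
  · simp only [hC, if_neg hβ, if_neg hδ]
    have L : ∑ γ : Fin n, (Ring.inverse (d β) * Γ α β γ) * (Ring.inverse (d δ) * Γ γ δ μ)
        = Ring.inverse (d β) * Ring.inverse (d δ) * ∑ γ : Fin n, Γ α β γ * Γ γ δ μ := by
      rw [Finset.mul_sum]; exact Finset.sum_congr rfl (fun γ _ => by ring)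
    have R : ∑ γ : Fin n, (Ring.inverse (d δ) * Γ α δ γ) * (Ring.inverse (d β) * Γ γ β μ)
        = Ring.inverse (d β) * Ring.inverse (d δ) * ∑ γ : Fin n, Γ α δ γ * Γ γ β μ := by
      rw [Finset.mul_sum]; exact Finset.sum_congr rfl (fun γ _ => by ring)
    rw [L, R, h2]
end

section
/- Let n ≥ 2 and let d : {1,…,n} → ℝ satisfy d(1) = 1 and 0 ≤ d(i) < 1 for every i ≠ 1. Let Ω := {z ∈ ℂⁿ | Im(z_n) > 0} and let F : Ω → ℂ be holomorphic. Suppose that all third-order partial derivatives of F vanish identically on Ω (∂_α∂_β∂_γ F ≡ 0 for all α,β,γ), and that F satisfies the weighted Euler equation Σ_{α=1}^n d(α)·z_α·∂_α F(z) = 2·F(z) for all z ∈ Ω. Then there exists a constant c ∈ ℂ such that F(z) = c·z₁² for all z ∈ Ω. -/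
/-!
Differentiating the Euler equation `∑ d_α z_α ∂_α F = D F` once, and then once more using that
the third derivatives vanish, gives `d_γ ∂_β∂_γ F = (D - d_β) ∂_γ∂_β F`. Combining this with the
same identity for `(γ, β)` yields `D (d_β + d_γ - D) ∂_β∂_γ F = 0`, with no appeal to the
symmetry of second derivatives. For `D = 2`, `d₁ = 1` and all other weights `< 1`, only `∂₁∂₁F`
survives; it is constant because its derivatives vanish on the convex set `Ω`, and the Euler
equation then reads `z₁ ∂₁F = z₁² ∂₁∂₁F = 2F`.

These differentiations are legitimate because a directional derivative of a holomorphic function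
on an open subset of a finite-dimensional space is again holomorphic: it is the Cauchy integral
`cderiv` of the function along a complex line, which can be differentiated under the integral
sign since the Cauchy estimates bound the derivative locally uniformly.
-/

/-- The partial derivative `∂_α f` of a function `f : ℂⁿ → ℂ` in the direction of
the `α`-th coordinate. -/
noncomputable def pd {n : ℕ} (α : Fin n) (f : (Fin n → ℂ) → ℂ) :
    (Fin n → ℂ) → ℂ :=
  fun z => fderiv ℂ f z (Pi.single α 1)

open Set Metric Filter Topology Complex

section Holomorphic

variable {E : Type*} [NormedAddCommGroup E] [NormedSpace ℂ E] {U : Set E} {g : E → ℂ}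

theorem DifferentiableOn.fderiv_apply_eq_cderiv (hg : DifferentiableOn ℂ g U) (hU : IsOpen U)
    {x v : E} {R : ℝ} (hR : 0 < R) (hxv : ∀ t ∈ closedBall (0 : ℂ) R, x + t • v ∈ U) :
    fderiv ℂ g x v = cderiv R (fun t : ℂ => g (x + t • v)) 0 := by
  have hline : Continuous fun t : ℂ => x + t • v := by fun_prop
  have hslice : DifferentiableOn ℂ (fun t : ℂ => g (x + t • v))
      ((fun t : ℂ => x + t • v) ⁻¹' U) :=
    hg.comp (by fun_prop) fun t ht => ht
  rw [cderiv_eq_deriv (hU.preimage hline) hslice hR hxv]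
  have hx : x ∈ U := by simpa using hxv 0 (mem_closedBall_self hR.le)
  have hderiv := (hg.differentiableAt (hU.mem_nhds hx)).hasFDerivAt.comp_hasDerivAt_of_eq (0 : ℂ)
    (((hasDerivAt_id (0 : ℂ)).smul_const v).const_add x) (by simp)
  rw [one_smul] at hderiv
  exact hderiv.deriv.symm

theorem DifferentiableOn.norm_fderiv_le (hg : DifferentiableOn ℂ g U) (hU : IsOpen U)
    {x : E} {R M : ℝ} (hR : 0 < R) (hxR : closedBall x R ⊆ U)
    (hM : ∀ y ∈ closedBall x R, ‖g y‖ ≤ M) : ‖fderiv ℂ g x‖ ≤ M / R := by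
  have hM0 : 0 ≤ M := (norm_nonneg _).trans (hM x (mem_closedBall_self hR.le))
  refine ContinuousLinearMap.opNorm_le_bound _ (by positivity) fun v => ?_
  rcases eq_or_ne v 0 with rfl | hv
  · simp
  have hv0 : 0 < ‖v‖ := norm_pos_iff.mpr hv
  have hmaps : ∀ t : ℂ, ‖t‖ ≤ R / ‖v‖ → x + t • v ∈ closedBall x R := fun t ht => by
    rw [mem_closedBall, dist_eq_norm, add_sub_cancel_left, norm_smul]
    exact (le_div_iff₀ hv0).mp ht
  rw [hg.fderiv_apply_eq_cderiv hU (div_pos hR hv0) fun t ht => hxR (hmaps t (by simpa using ht))]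
  calc ‖cderiv (R / ‖v‖) (fun t : ℂ => g (x + t • v)) 0‖ ≤ M / (R / ‖v‖) :=
        norm_cderiv_le (div_pos hR hv0) fun t ht => hM _ (hmaps t (by simp_all))
    _ = M / R * ‖v‖ := by field_simp

theorem DifferentiableOn.exists_eventually_norm_fderiv_le (hg : DifferentiableOn ℂ g U)
    (hU : IsOpen U) {x : E} (hx : x ∈ U) : ∃ C, ∀ᶠ y in 𝓝 x, ‖fderiv ℂ g y‖ ≤ C := by
  have hbdd : ∀ᶠ y in 𝓝 x, y ∈ U ∧ ‖g y‖ < ‖g x‖ + 1 :=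
    (hU.eventually_mem hx).and
      ((hg.continuousOn.continuousAt (hU.mem_nhds hx)).norm.eventually (gt_mem_nhds (by simp)))
  obtain ⟨δ, hδ, hδU⟩ := nhds_basis_closedBall.mem_iff.mp hbdd
  refine ⟨(‖g x‖ + 1) / (δ / 2), ?_⟩
  filter_upwards [ball_mem_nhds x (half_pos hδ)] with y hy
  have hsub : closedBall y (δ / 2) ⊆ closedBall x δ := closedBall_subset_closedBall' (by
    rw [mem_ball] at hy; linarith)
  exact hg.norm_fderiv_le hU (half_pos hδ) (fun z hz => (hδU (hsub hz)).1)
    fun z hz => (hδU (hsub hz)).2.le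

theorem differentiableAt_cderiv_comp_add [FiniteDimensional ℂ E] {V : Set E}
    (hg : DifferentiableOn ℂ g V) (hV : IsOpen V) {C : ℝ} (hC : ∀ y ∈ V, ‖fderiv ℂ g y‖ ≤ C)
    {x₀ v : E} {R : ℝ} (hR : 0 < R)
    (hx₀ : ∀ᶠ x in 𝓝 x₀, ∀ t ∈ sphere (0 : ℂ) R, x + t • v ∈ V) :
    DifferentiableAt ℂ (fun x => cderiv R (fun t : ℂ => g (x + t • v)) 0) x₀ := by
  borelize E
  set k : ℝ → ℂ := fun θ => deriv (circleMap 0 R) θ * (circleMap 0 R θ ^ 2)⁻¹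
  have hk : Continuous k := by
    simp only [k, deriv_circleMap]
    exact ((continuous_circleMap 0 R).mul continuous_const).mul
      (((continuous_circleMap 0 R).pow 2).inv₀ fun θ => pow_ne_zero 2 (circleMap_ne_center hR.ne'))
  have hk_norm : ∀ θ, ‖k θ‖ = R⁻¹ := fun θ => by
    simp only [k, deriv_circleMap, norm_mul, norm_inv, norm_pow,
      norm_circleMap_zero, norm_I, abs_of_pos hR]
    field_simp
  have hp : ∀ᶠ x in 𝓝 x₀, ∀ θ : ℝ, x + circleMap 0 R θ • v ∈ V := by
    filter_upwards [hx₀] with x hx θ using hx _ (circleMap_mem_sphere 0 hR.le θ)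
  have hcont : ∀ᶠ x in 𝓝 x₀, Continuous fun θ => k θ • g (x + circleMap 0 R θ • v) := by
    filter_upwards [hp] with x hx using hk.smul (hg.continuousOn.comp_continuous (by fun_prop) hx)
  -- finite dimensionality makes `θ ↦ fderiv ℂ g (x₀ + circleMap 0 R θ • v)` strongly measurable
  have hint := intervalIntegral.hasFDerivAt_integral_of_dominated_of_fderiv_le
    (μ := MeasureTheory.volume) (a := 0) (b := 2 * Real.pi) (bound := fun _ => R⁻¹ * C)
    (F' := fun x θ => k θ • fderiv ℂ g (x + circleMap 0 R θ • v)) hp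
    (hcont.mono fun x hx => hx.aestronglyMeasurable)
    (hcont.self_of_nhds.intervalIntegrable _ _)
    (hk.aestronglyMeasurable.smul
      ((measurable_fderiv ℂ g).comp (by fun_prop : Continuous _).measurable).aestronglyMeasurable)
    (Eventually.of_forall fun θ _ x hx => by
      rw [norm_smul, hk_norm]
      exact mul_le_mul_of_nonneg_left (hC _ (hx θ)) (by positivity))
    intervalIntegrable_const
    (Eventually.of_forall fun θ _ x hx => by
      have hgx := (hg.differentiableAt (hV.mem_nhds (hx θ))).hasFDerivAt.comp x
        ((hasFDerivAt_id x).add_const (circleMap 0 R θ • v))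
      exact (hgx.const_smul (k θ)).congr_fderiv (by rw [ContinuousLinearMap.comp_id]))
  have hrepr : (fun x => cderiv R (fun t : ℂ => g (x + t • v)) 0) =
      fun x => (2 * Real.pi * I : ℂ)⁻¹ •
        ∫ θ in (0)..(2 * Real.pi), k θ • g (x + circleMap 0 R θ • v) := by
    funext x
    simp only [cderiv, circleIntegral, sub_zero, smul_eq_mul, mul_assoc, k]
  rw [hrepr]
  exact hint.differentiableAt.fun_const_smul _

theorem DifferentiableOn.fderiv_apply [FiniteDimensional ℂ E] (hg : DifferentiableOn ℂ g U)
    (hU : IsOpen U) (v : E) : DifferentiableOn ℂ (fun x => fderiv ℂ g x v) U := by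
  intro x₀ hx₀
  obtain ⟨C, hC⟩ := hg.exists_eventually_norm_fderiv_le hU hx₀
  obtain ⟨δ, hδ, hδV⟩ := nhds_basis_ball.mem_iff.mp ((hU.eventually_mem hx₀).and hC)
  set R := δ / (2 * (‖v‖ + 1))
  have hR : 0 < R := by positivity
  have hRv : R * (‖v‖ + 1) = δ / 2 := by simp only [R]; field_simp
  have hline : ∀ x ∈ ball x₀ (δ / 2), ∀ t : ℂ, ‖t‖ ≤ R → x + t • v ∈ ball x₀ δ := by
    intro x hx t ht
    rw [mem_ball, dist_eq_norm] at hx ⊢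
    calc ‖x + t • v - x₀‖ ≤ ‖x - x₀‖ + ‖t‖ * ‖v‖ := by
          rw [add_sub_right_comm, ← norm_smul]; exact norm_add_le _ _
      _ < δ := by nlinarith [norm_nonneg t, norm_nonneg v]
  have heq : (fun x => fderiv ℂ g x v) =ᶠ[𝓝 x₀] fun x => cderiv R (fun t => g (x + t • v)) 0 := by
    filter_upwards [ball_mem_nhds x₀ (half_pos hδ)] with x hx
    exact hg.fderiv_apply_eq_cderiv hU hR fun t ht =>
      (hδV (hline x hx t (mem_closedBall_zero_iff.mp ht))).1
  refine (heq.differentiableAt_iff.mpr ?_).differentiableWithinAt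
  refine differentiableAt_cderiv_comp_add (hg.mono fun y hy => (hδV hy).1) isOpen_ball
    (fun y hy => (hδV hy).2) hR ?_
  filter_upwards [ball_mem_nhds x₀ (half_pos hδ)] with x hx t ht
  exact hline x hx t (mem_sphere_zero_iff_norm.mp ht).le

end Holomorphic

section Euler

variable {n : ℕ}

theorem pd_sum_mul_apply_mul (d : Fin n → ℂ) {φ : Fin n → (Fin n → ℂ) → ℂ} {z : Fin n → ℂ}
    (hφ : ∀ α, DifferentiableAt ℂ (φ α) z) (γ : Fin n) :
    pd γ (fun w => ∑ α, d α * w α * φ α w) z = d γ * φ γ z + ∑ α, d α * z α * pd γ (φ α) z := by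
  have hsum := HasFDerivAt.fun_sum (u := Finset.univ) fun α _ =>
    ((hasFDerivAt_apply α z).const_mul (d α)).fun_mul (hφ α).hasFDerivAt
  rw [pd, hsum.fderiv]
  simp only [pd, sum_apply, add_apply, smul_apply, ContinuousLinearMap.proj_apply, smul_eq_mul,
    Pi.single_apply, mul_ite, mul_one, mul_zero, Finset.sum_ite_eq', Finset.mem_univ, if_true,
    Finset.sum_add_distrib]
  ring

theorem Filter.EventuallyEq.pd_eq {f f' : (Fin n → ℂ) → ℂ} {z : Fin n → ℂ} (h : f =ᶠ[𝓝 z] f')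
    (γ : Fin n) : pd γ f z = pd γ f' z := by
  simp only [pd, h.fderiv_eq]

theorem pd_const_mul (c : ℂ) (f : (Fin n → ℂ) → ℂ) (γ : Fin n) :
    pd γ (fun w => c * f w) = fun z => c * pd γ f z := by
  funext z
  simp only [pd]
  rw [show (fun w => c * f w) = c • f from rfl, fderiv_const_smul_field]
  rfl

theorem IsOpen.exists_eq_const_of_pd_eq_zero {Ω : Set (Fin n → ℂ)} {G : (Fin n → ℂ) → ℂ}
    (hΩ : IsOpen Ω) (hΩc : IsPreconnected Ω) (hG : DifferentiableOn ℂ G Ω)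
    (h : ∀ i, ∀ z ∈ Ω, pd i G z = 0) : ∃ c, ∀ z ∈ Ω, G z = c :=
  hΩ.exists_is_const_of_fderiv_eq_zero hΩc hG fun z hz =>
    ContinuousLinearMap.coe_injective (LinearMap.pi_ext fun i x => by
      rw [← mul_one x, ← smul_eq_mul, Pi.single_smul']
      have hi : fderiv ℂ G z (Pi.single i 1) = 0 := h i z hz
      simp [hi])

variable {Ω : Set (Fin n → ℂ)} {F : (Fin n → ℂ) → ℂ} {d : Fin n → ℂ} {D : ℂ}

theorem DifferentiableOn.pd (hF : DifferentiableOn ℂ F Ω) (hΩ : IsOpen Ω) (γ : Fin n) :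
    DifferentiableOn ℂ (pd γ F) Ω :=
  hF.fderiv_apply hΩ _

theorem sum_mul_pd_pd_eq (hF : DifferentiableOn ℂ F Ω) (hΩ : IsOpen Ω)
    (hE : ∀ z ∈ Ω, ∑ α, d α * z α * pd α F z = D * F z) {z : Fin n → ℂ} (hz : z ∈ Ω)
    (β : Fin n) : ∑ α, d α * z α * pd β (pd α F) z = (D - d β) * pd β F z := by
  have hE' := Filter.EventuallyEq.pd_eq (f := fun w => ∑ α, d α * w α * pd α F w)
    (eventually_of_mem (hΩ.mem_nhds hz) hE) β
  rw [pd_sum_mul_apply_mul d (fun α => (hF.pd hΩ α z hz).differentiableAt (hΩ.mem_nhds hz)),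
    pd_const_mul] at hE'
  linear_combination hE'

theorem mul_pd_pd_eq (hF : DifferentiableOn ℂ F Ω) (hΩ : IsOpen Ω)
    (hE : ∀ z ∈ Ω, ∑ α, d α * z α * pd α F z = D * F z)
    (h3 : ∀ α β γ, ∀ z ∈ Ω, pd α (pd β (pd γ F)) z = 0) {z : Fin n → ℂ} (hz : z ∈ Ω)
    (β γ : Fin n) : d γ * pd β (pd γ F) z = (D - d β) * pd γ (pd β F) z := by
  have hE' := Filter.EventuallyEq.pd_eq (f := fun w => ∑ α, d α * w α * pd β (pd α F) w)
    (eventually_of_mem (hΩ.mem_nhds hz) fun w hw => sum_mul_pd_pd_eq hF hΩ hE hw β) γ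
  rw [pd_sum_mul_apply_mul d
    (fun α => ((hF.pd hΩ α).pd hΩ β z hz).differentiableAt (hΩ.mem_nhds hz)), pd_const_mul] at hE'
  simpa only [h3 _ _ _ z hz, mul_zero, Finset.sum_const_zero, add_zero] using hE'

theorem pd_pd_eq_zero (hF : DifferentiableOn ℂ F Ω) (hΩ : IsOpen Ω)
    (hE : ∀ z ∈ Ω, ∑ α, d α * z α * pd α F z = D * F z)
    (h3 : ∀ α β γ, ∀ z ∈ Ω, pd α (pd β (pd γ F)) z = 0) (hD : D ≠ 0) {z : Fin n → ℂ}
    (hz : z ∈ Ω) {β γ : Fin n} (hβγ : d β + d γ ≠ D) : pd β (pd γ F) z = 0 := by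
  have e₁ := mul_pd_pd_eq hF hΩ hE h3 hz β γ
  have e₂ := mul_pd_pd_eq hF hΩ hE h3 hz γ β
  have key : D * (d β + d γ - D) * pd β (pd γ F) z = 0 := by
    linear_combination d β * e₁ + (D - d β) * e₂
  simpa [hD, sub_ne_zero.mpr hβγ] using key

theorem pd_eq_zero_of_forall_add_ne (hF : DifferentiableOn ℂ F Ω) (hΩ : IsOpen Ω)
    (hE : ∀ z ∈ Ω, ∑ α, d α * z α * pd α F z = D * F z)
    (h3 : ∀ α β γ, ∀ z ∈ Ω, pd α (pd β (pd γ F)) z = 0) (hD : D ≠ 0) {z : Fin n → ℂ}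
    (hz : z ∈ Ω) {β : Fin n} (hβ : d β ≠ D) (hβα : ∀ α, d β + d α ≠ D) : pd β F z = 0 := by
  have h := sum_mul_pd_pd_eq hF hΩ hE hz β
  simp only [pd_pd_eq_zero hF hΩ hE h3 hD hz (hβα _), mul_zero, Finset.sum_const_zero] at h
  simpa [sub_ne_zero.mpr hβ.symm] using h.symm

end Euler

theorem ofReal_add_ne_two {ι : Type*} {d : ι → ℝ} {i₀ : ι} (hd1 : d i₀ = 1)
    (hd : ∀ i ≠ i₀, d i < 1) : ∀ β ≠ i₀, ∀ α, (d β : ℂ) + d α ≠ 2 := by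
  intro β hβ α
  have hα : d α ≤ 1 := by
    rcases eq_or_ne α i₀ with rfl | hα
    exacts [hd1.le, (hd α hα).le]
  exact_mod_cast (show d β + d α < 2 by linarith [hd β hβ]).ne

/-- Let `d(1) = 1` and `0 ≤ d(i) < 1` for `i ≠ 1`, and let `F` be holomorphic on
`Ω = {z ∈ ℂⁿ | Im z_n > 0}`.  If all third-order partial derivatives of `F` vanish
on `Ω` and `F` satisfies the weighted Euler equation `Σ_α d(α)·z_α·∂_α F = 2F`,
then `F = c·z₁²` for some constant `c ∈ ℂ`. -/
theorem potential_unique_of_vanishing_third_derivatives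
    (n : ℕ) (hn : 2 ≤ n) (d : Fin n → ℝ)
    (hd1 : d ⟨0, by omega⟩ = 1)
    (hd : ∀ i : Fin n, i ≠ ⟨0, by omega⟩ → 0 ≤ d i ∧ d i < 1)
    (F : (Fin n → ℂ) → ℂ)
    (hF : DifferentiableOn ℂ F {z : Fin n → ℂ | 0 < (z ⟨n - 1, by omega⟩).im})
    (h3 : ∀ α β γ : Fin n, ∀ z ∈ {z : Fin n → ℂ | 0 < (z ⟨n - 1, by omega⟩).im},
      pd α (pd β (pd γ F)) z = 0)
    (hE : ∀ z ∈ {z : Fin n → ℂ | 0 < (z ⟨n - 1, by omega⟩).im},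
      ∑ α : Fin n, (d α : ℂ) * z α * pd α F z = 2 * F z) :
    ∃ c : ℂ, ∀ z ∈ {z : Fin n → ℂ | 0 < (z ⟨n - 1, by omega⟩).im},
      F z = c * (z ⟨0, by omega⟩) ^ 2 := by
  set i₀ : Fin n := ⟨0, by omega⟩
  set Ω := {z : Fin n → ℂ | 0 < (z ⟨n - 1, by omega⟩).im}
  have hΩ : IsOpen Ω := isOpen_lt continuous_const (continuous_im.comp (continuous_apply _))
  have hΩc : IsPreconnected Ω :=
    (convex_halfSpace_gt (f := fun z : Fin n → ℂ => (z ⟨n - 1, by omega⟩).im)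
      ⟨fun _ _ => rfl, fun _ _ => by simp⟩ 0).isPreconnected
  have hadd := ofReal_add_ne_two hd1 fun i hi => (hd i hi).2
  obtain ⟨c, hc⟩ := hΩ.exists_eq_const_of_pd_eq_zero hΩc ((hF.pd hΩ i₀).pd hΩ i₀)
    fun i z hz => h3 i i₀ i₀ z hz
  refine ⟨c / 2, fun z hz => ?_⟩
  have hpd : ∀ β ≠ i₀, pd β F z = 0 := fun β hβ =>
    pd_eq_zero_of_forall_add_ne hF hΩ hE h3 two_ne_zero hz
      (by exact_mod_cast ((hd β hβ).2.trans one_lt_two).ne) (hadd β hβ)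
  have hpd₀ : pd i₀ F z = z i₀ * c := by
    have h := sum_mul_pd_pd_eq hF hΩ hE hz i₀
    rw [Fintype.sum_eq_single i₀ fun α hα => by
        rw [pd_pd_eq_zero hF hΩ hE h3 two_ne_zero hz (add_comm (d α : ℂ) _ ▸ hadd α hα i₀),
          mul_zero],
      hc z hz, hd1, ofReal_one] at h
    linear_combination -h
  have hEz := hE z hz
  rw [Fintype.sum_eq_single i₀ fun α hα => by rw [hpd α hα, mul_zero], hd1, ofReal_one,
    hpd₀] at hEz
  linear_combination -hEz / 2
end
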